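/- arXiv:2403.12791 — 2 statements merged into one kernel-verified Lean document; each statement's English description precedes it below -/
import Mathlib

section
/- Let u be a Sturmian sequence with irrational slope α ∈ (0,1), let a = 1^ω, let b be a Sturmian sequence over {2,3}, and let v = colour(u, a, b). Then for every n ≥ 1 the factor complexity of v satisfies C_v(n) ≤ P_α(n) + (n+1)⌈nα⌉, where P_α(n) is the number of factors of u of length n containing ⌈nα⌉ occurrences of b. -/
/-!
A factor of `v` of length `n` is determined by the factor `w` of `u` at the same position together
with the factor of `b` of length `|w|_b` that fills its `b`-positions. Hence
`C_v(n) ≤ ∑_w C_b(|w|_b) ≤ ∑_w (|w|_b + 1)`, summed over the at most `n + 1` factors `w` of `u`.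
Every `|w|_b` is at most `⌈nα⌉`, and equality holds for exactly `P_α(n)` of them, so the sum is at
most `(n + 1)⌈nα⌉ + P_α(n)`.

A Sturmian word of slope `γ` has at most `m + 1` factors of length `m`: the factor read from a point
`x ∈ [0, 1)` has `⌊x + kγ⌋` letters `b` among its first `k`, so it is determined by
`∑_{k ≤ m} ⌊x + kγ⌋`, a monotone function of `x` with values in an interval of `m + 1` integers.
-/

open scoped Classical

/-- The factor of length `n` of the sequence `s` starting at position `i`. -/
def fac {A : Type*} (s : ℕ → A) (i n : ℕ) : List A :=
  (List.range n).map (fun j => s (i + j))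

/-- Sturmian sequence with slope `α` and intercept `ρ`:
`true` codes letter b (interval `[1-α,1)`), `false` codes letter a. -/
noncomputable def sturmian (α ρ : ℝ) (n : ℕ) : Bool :=
  if 1 - α ≤ Int.fract (ρ + n * α) then true else false

/-- Sturmian sequence over the alphabet `{2,3}` with slope `γ` and intercept `ρ`. -/
noncomputable def sturmian23 (γ ρ : ℝ) (n : ℕ) : ℕ :=
  if 1 - γ ≤ Int.fract (ρ + n * γ) then 3 else 2

/-- Number of positions `k < n` with `u k = true` (letter `b`). -/
def countB (u : ℕ → Bool) (n : ℕ) : ℕ :=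
  ((Finset.range n).filter (fun k => u k = true)).card

/-- Number of positions `k < n` with `u k = false` (letter `a`). -/
def countA (u : ℕ → Bool) (n : ℕ) : ℕ :=
  ((Finset.range n).filter (fun k => u k = false)).card

/-- Colouring of a binary sequence `u` by sequences `a` and `b`. -/
def colour {A : Type*} (u : ℕ → Bool) (a b : ℕ → A) (n : ℕ) : A :=
  if u n then b (countB u n) else a (countA u n)

def factorSet {A : Type*} (s : ℕ → A) (n : ℕ) : Set (List A) :=
  {w | ∃ i, w = fac s i n}

section Factors

variable {A B : Type*}

lemma fac_length (s : ℕ → A) (i n : ℕ) : (fac s i n).length = n := by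
  simp [fac]

lemma fac_succ (s : ℕ → A) (i n : ℕ) : fac s i (n + 1) = fac s i n ++ [s (i + n)] := by
  simp [fac, List.range_succ]

lemma fac_succ' (s : ℕ → A) (i n : ℕ) : fac s i (n + 1) = s i :: fac s (i + 1) n := by
  simp [fac, List.range_succ_eq_map, Nat.add_right_comm, Nat.add_assoc]

lemma fac_take (s : ℕ → A) (i n k : ℕ) (hk : k ≤ n) : (fac s i n).take k = fac s i k := by
  simp [fac, ← List.map_take, List.take_range, Nat.min_eq_left hk]

lemma fac_comp (f : A → B) (s : ℕ → A) (i n : ℕ) : fac (f ∘ s) i n = (fac s i n).map f := by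
  simp [fac]

lemma factorSet_comp (f : A → B) (s : ℕ → A) (n : ℕ) :
    factorSet (f ∘ s) n = List.map f '' factorSet s n := by
  ext w
  simp [factorSet, fac_comp, eq_comm]

lemma factorSet_finite [Finite A] (s : ℕ → A) (n : ℕ) : (factorSet s n).Finite :=
  (List.finite_length_eq A n).subset <| by
    rintro _ ⟨i, rfl⟩
    simp [fac]

end Factors

lemma List.eq_of_count_take_eq {w₁ w₂ : List Bool} (hlen : w₁.length = w₂.length)
    (h : ∀ k ≤ w₁.length, (w₁.take k).count true = (w₂.take k).count true) : w₁ = w₂ := by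
  refine List.ext_getElem hlen fun k hk₁ hk₂ => ?_
  have hstep := h (k + 1) hk₁
  rw [List.take_add_one, List.take_add_one, List.count_append, List.count_append, h k hk₁.le,
    List.getElem?_eq_getElem hk₁, List.getElem?_eq_getElem hk₂] at hstep
  cases h₁ : w₁[k] <;> cases h₂ : w₂[k] <;> simp_all

section Colouring

variable {A : Type*}

def fillTrue (c : A) : List Bool → List A → List A
  | [], _ => []
  | false :: w, l => c :: fillTrue c w l
  | true :: w, l => l.headD c :: fillTrue c w l.tail

lemma countB_succ (u : ℕ → Bool) (i : ℕ) :
    countB u (i + 1) = countB u i + if u i then 1 else 0 := by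
  simp only [countB, Finset.range_add_one, Finset.filter_insert]
  split_ifs <;> simp

lemma fac_colour_const (u : ℕ → Bool) (b : ℕ → A) (c : A) (i n : ℕ) :
    fac (colour u (fun _ => c) b) i n =
      fillTrue c (fac u i n) (fac b (countB u i) ((fac u i n).count true)) := by
  induction n generalizing i with
  | zero => rfl
  | succ n ih =>
    rw [fac_succ', fac_succ', ih, countB_succ]
    cases hu : u i
    · simp [colour, hu, fillTrue]
    · simp [colour, hu, fillTrue, fac_succ']

lemma ncard_factorSet_colour_le (u : ℕ → Bool) (b : ℕ → A) (c : A) (n : ℕ)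
    (hb : ∀ m, (factorSet b m).Finite) :
    (factorSet (colour u (fun _ => c) b) n).ncard ≤
      ∑ w ∈ (factorSet_finite u n).toFinset, (factorSet b (w.count true)).ncard := by
  set pairs := (factorSet_finite u n).toFinset.sigma fun w => (hb (w.count true)).toFinset
  have hsub : factorSet (colour u (fun _ => c) b) n ⊆
      ↑(pairs.image fun p => fillTrue c p.1 p.2) := by
    rintro _ ⟨i, rfl⟩
    simp only [Finset.coe_image, Set.mem_image, Finset.mem_coe]
    refine ⟨⟨fac u i n, fac b (countB u i) _⟩, ?_, (fac_colour_const u b c i n).symm⟩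
    simp only [pairs, Finset.mem_sigma, Set.Finite.mem_toFinset]
    exact ⟨⟨i, rfl⟩, ⟨countB u i, rfl⟩⟩
  calc (factorSet (colour u (fun _ => c) b) n).ncard
      ≤ (pairs.image fun p => fillTrue c p.1 p.2).card :=
        (Set.ncard_le_ncard hsub (Finset.finite_toSet _)).trans_eq (Set.ncard_coe_finset _)
    _ ≤ pairs.card := Finset.card_image_le
    _ = _ := by
        simp only [pairs, Finset.card_sigma, Set.ncard_eq_toFinset_card _ (hb _)]

end Colouring

lemma sturmian_fract (γ ρ : ℝ) : sturmian γ (Int.fract ρ) = sturmian γ ρ := by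
  ext k
  rw [sturmian, sturmian, ← Int.fract_add_intCast (Int.fract ρ + k * γ) ⌊ρ⌋]
  congr 3
  rw [← Int.self_sub_floor]
  ring

lemma fac_sturmian (γ ρ : ℝ) (i m : ℕ) :
    fac (sturmian γ ρ) i m = fac (sturmian γ (ρ + i * γ)) 0 m := by
  simp only [fac, sturmian, Nat.cast_add, zero_add, add_mul, add_assoc]

def prefixCountSum (w : List Bool) : ℕ :=
  ∑ k ∈ Finset.range (w.length + 1), (w.take k).count true

section Sturmian

variable {γ : ℝ}

lemma floor_add_of_mem_Ioo (hγ : γ ∈ Set.Ioo 0 1) (t : ℝ) :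
    ⌊t + γ⌋ = ⌊t⌋ + if 1 - γ ≤ Int.fract t then 1 else 0 := by
  have hsplit : t + γ = (Int.fract t + γ) + (⌊t⌋ : ℤ) := by rw [← Int.self_sub_floor]; ring
  rw [hsplit, Int.floor_add_intCast, add_comm]
  congr 1
  split_ifs with h
  · rw [Int.floor_eq_iff]; constructor <;> push_cast <;> linarith [Int.fract_lt_one t, hγ.2]
  · rw [Int.floor_eq_iff]; constructor <;> push_cast <;> linarith [Int.fract_nonneg t, hγ.1]

lemma count_fac_sturmian (hγ : γ ∈ Set.Ioo 0 1) (ρ : ℝ) (m : ℕ) :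
    ((fac (sturmian γ ρ) 0 m).count true : ℤ) = ⌊ρ + m * γ⌋ - ⌊ρ⌋ := by
  induction m with
  | zero => simp [fac]
  | succ m ih =>
    rw [fac_succ, List.count_append, Nat.cast_add, ih, Nat.cast_succ, add_one_mul, ← add_assoc,
      floor_add_of_mem_Ioo hγ, sturmian, zero_add]
    split_ifs <;> simp [sub_add_eq_add_sub]

lemma count_fac_sturmian_le_ceil (hγ : γ ∈ Set.Ioo 0 1) (ρ : ℝ) (i m : ℕ) :
    ((fac (sturmian γ ρ) i m).count true : ℤ) ≤ ⌈(m : ℝ) * γ⌉ := by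
  rw [fac_sturmian, count_fac_sturmian hγ, sub_le_iff_le_add, Int.floor_le_iff]
  push_cast
  linarith [Int.lt_floor_add_one (ρ + i * γ), Int.le_ceil ((m : ℝ) * γ)]

lemma count_take_fac_sturmian (hγ : γ ∈ Set.Ioo 0 1) {x : ℝ} (hx : x ∈ Set.Ico 0 1) {k m : ℕ}
    (hk : k ≤ m) : (((fac (sturmian γ x) 0 m).take k).count true : ℤ) = ⌊x + k * γ⌋ := by
  rw [fac_take _ _ _ _ hk, count_fac_sturmian hγ, Int.floor_eq_zero_iff.mpr hx, sub_zero]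

lemma prefixCountSum_fac_sturmian (hγ : γ ∈ Set.Ioo 0 1) {x : ℝ} (hx : x ∈ Set.Ico 0 1)
    (m : ℕ) : (prefixCountSum (fac (sturmian γ x) 0 m) : ℤ) =
      ∑ k ∈ Finset.range (m + 1), ⌊x + k * γ⌋ := by
  rw [prefixCountSum, fac_length, Nat.cast_sum]
  exact Finset.sum_congr rfl fun k hk =>
    count_take_fac_sturmian hγ hx (Nat.lt_succ_iff.mp (Finset.mem_range.mp hk))

/-- `x ↦ ⌊x + kγ⌋` is monotone for every `k`, so equal sums force equal prefix counts. -/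
lemma fac_sturmian_eq_of_prefixCountSum_eq (hγ : γ ∈ Set.Ioo 0 1) {x y : ℝ}
    (hx : x ∈ Set.Ico 0 1) (hy : y ∈ Set.Ico 0 1) (hxy : x ≤ y) (m : ℕ)
    (h : prefixCountSum (fac (sturmian γ x) 0 m) = prefixCountSum (fac (sturmian γ y) 0 m)) :
    fac (sturmian γ x) 0 m = fac (sturmian γ y) 0 m := by
  have hsum := congrArg (Nat.cast : ℕ → ℤ) h
  rw [prefixCountSum_fac_sturmian hγ hx, prefixCountSum_fac_sturmian hγ hy,
    Finset.sum_eq_sum_iff_of_le fun k _ => Int.floor_le_floor (by linarith)] at hsum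
  refine List.eq_of_count_take_eq (by simp only [fac_length]) fun k hk => ?_
  rw [fac_length] at hk
  have hfloor := hsum k (Finset.mem_range.mpr (Nat.lt_succ_of_le hk))
  exact_mod_cast (count_take_fac_sturmian hγ hx hk).trans
    (hfloor.trans (count_take_fac_sturmian hγ hy hk).symm)

lemma prefixCountSum_fac_sturmian_mem_Icc (hγ : γ ∈ Set.Ioo 0 1) {x : ℝ}
    (hx : x ∈ Set.Ico 0 1) (m : ℕ) :
    (prefixCountSum (fac (sturmian γ x) 0 m) : ℤ) ∈
      Set.Icc (∑ k ∈ Finset.range (m + 1), ⌊k * γ⌋) (∑ k ∈ Finset.range (m + 1), ⌊k * γ⌋ + m) := by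
  rw [prefixCountSum_fac_sturmian hγ hx]
  constructor
  · exact Finset.sum_le_sum fun k _ => Int.floor_le_floor (by linarith [hx.1])
  · rw [Finset.sum_range_succ', Finset.sum_range_succ' (fun k : ℕ => ⌊k * γ⌋)]
    push_cast
    have hterm : ∀ k ∈ Finset.range m, ⌊x + ((k : ℝ) + 1) * γ⌋ ≤ ⌊((k : ℝ) + 1) * γ⌋ + 1 :=
      fun k _ => by rw [← Int.floor_add_one]; exact Int.floor_le_floor (by linarith [hx.2])
    have := Finset.sum_le_sum hterm
    rw [Finset.sum_add_distrib, Finset.sum_const, Finset.card_range, nsmul_one] at this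
    simp only [zero_mul, add_zero, Int.floor_eq_zero_iff.mpr hx, Int.floor_zero]
    linarith

theorem ncard_factorSet_sturmian_le (hγ : γ ∈ Set.Ioo 0 1) (ρ : ℝ) (m : ℕ) :
    (factorSet (sturmian γ ρ) m).ncard ≤ m + 1 := by
  set L := ∑ k ∈ Finset.range (m + 1), ⌊k * γ⌋
  set S := (fun x => fac (sturmian γ x) 0 m) '' Set.Ico 0 1
  have hsub : factorSet (sturmian γ ρ) m ⊆ S := by
    rintro _ ⟨i, rfl⟩
    exact ⟨Int.fract (ρ + i * γ), ⟨Int.fract_nonneg _, Int.fract_lt_one _⟩,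
      by dsimp only; rw [sturmian_fract, fac_sturmian γ ρ i]⟩
  have hmaps : ∀ w ∈ S, (prefixCountSum w : ℤ) ∈ Set.Icc L (L + m) := by
    rintro _ ⟨x, hx, rfl⟩
    exact prefixCountSum_fac_sturmian_mem_Icc hγ hx m
  have hinj : Set.InjOn (fun w => (prefixCountSum w : ℤ)) S := by
    rintro _ ⟨x, hx, rfl⟩ _ ⟨y, hy, rfl⟩ h
    rcases le_total x y with hxy | hyx
    · exact fac_sturmian_eq_of_prefixCountSum_eq hγ hx hy hxy m (Nat.cast_injective h)
    · exact (fac_sturmian_eq_of_prefixCountSum_eq hγ hy hx hyx m (Nat.cast_injective h.symm)).symm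
  calc (factorSet (sturmian γ ρ) m).ncard
      ≤ (Set.Icc L (L + m)).ncard :=
        Set.ncard_le_ncard_of_injOn _ (fun w hw => hmaps w (hsub hw)) (hinj.mono hsub)
          (Set.finite_Icc _ _)
    _ = m + 1 := by
        rw [← Finset.coe_Icc, Set.ncard_coe_finset, Int.card_Icc]
        omega

end Sturmian

lemma sturmian23_eq_comp (γ ρ : ℝ) :
    sturmian23 γ ρ = (fun t : Bool => if t then 3 else 2) ∘ sturmian γ ρ := by
  ext k
  simp only [sturmian23, Function.comp_apply, sturmian]
  split_ifs <;> simp_all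

lemma Finset.sum_add_one_le_of_forall_le {ι : Type*} (s : Finset ι) (f : ι → ℤ) (Q : ℤ)
    (hf : ∀ i ∈ s, f i ≤ Q) :
    ∑ i ∈ s, (f i + 1) ≤ s.card * Q + (s.filter fun i => f i = Q).card := by
  calc ∑ i ∈ s, (f i + 1) ≤ ∑ i ∈ s, (Q + if f i = Q then 1 else 0) :=
        Finset.sum_le_sum fun i hi => by have := hf i hi; split_ifs <;> omega
    _ = s.card * Q + (s.filter fun i => f i = Q).card := by
        rw [Finset.sum_add_distrib, Finset.sum_const, Finset.sum_boole, nsmul_eq_mul]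

theorem stmt_5_general (α ρ₁ γ ρ₂ : ℝ) (hα : α ∈ Set.Ioo (0:ℝ) 1)
    (hγ : γ ∈ Set.Ioo (0:ℝ) 1)
    (n : ℕ) :
    ({w : List ℕ | ∃ i, w = fac (colour (sturmian α ρ₁) (fun _ => 1) (sturmian23 γ ρ₂)) i n}.ncard : ℤ) ≤
      ({w : List Bool | (∃ i, w = fac (sturmian α ρ₁) i n) ∧
          (w.count true : ℤ) = ⌈(n : ℝ) * α⌉}.ncard : ℤ) + (n + 1) * ⌈(n : ℝ) * α⌉ := by
  set U := (factorSet_finite (sturmian α ρ₁) n).toFinset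
  set Q := ⌈(n : ℝ) * α⌉
  have hb (m : ℕ) : (factorSet (sturmian23 γ ρ₂) m).Finite := by
    rw [sturmian23_eq_comp, factorSet_comp]
    exact (factorSet_finite _ m).image _
  have hbcard (m : ℕ) : (factorSet (sturmian23 γ ρ₂) m).ncard ≤ m + 1 := by
    rw [sturmian23_eq_comp, factorSet_comp]
    exact (Set.ncard_image_le (factorSet_finite _ m)).trans (ncard_factorSet_sturmian_le hγ ρ₂ m)
  have hcount : ∀ w ∈ U, (w.count true : ℤ) ≤ Q := by
    rintro _ hw
    obtain ⟨i, rfl⟩ := (Set.Finite.mem_toFinset _).mp hw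
    exact count_fac_sturmian_le_ceil hα ρ₁ i n
  have hU : (U.card : ℤ) ≤ n + 1 := by
    rw [← Set.ncard_eq_toFinset_card _ (factorSet_finite _ n)]
    exact_mod_cast ncard_factorSet_sturmian_le hα ρ₁ n
  have hP : {w : List Bool | (∃ i, w = fac (sturmian α ρ₁) i n) ∧ (w.count true : ℤ) = Q} =
      ↑(U.filter fun w => (w.count true : ℤ) = Q) := by
    ext w
    simp [U, factorSet]
  rw [hP, Set.ncard_coe_finset]
  calc _ ≤ ∑ w ∈ U, ((w.count true : ℤ) + 1) := by
        exact_mod_cast (ncard_factorSet_colour_le _ _ 1 n hb).trans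
          (Finset.sum_le_sum fun w _ => hbcard _)
    _ ≤ U.card * Q + (U.filter fun w => (w.count true : ℤ) = Q).card :=
        Finset.sum_add_one_le_of_forall_le U _ Q hcount
    _ ≤ _ := by
        have hQ : 0 ≤ Q := Int.ceil_nonneg (mul_nonneg n.cast_nonneg hα.1.le)
        linarith [mul_le_mul_of_nonneg_right hU hQ]

theorem stmt_5 (α ρ₁ γ ρ₂ : ℝ) (hα : α ∈ Set.Ioo (0:ℝ) 1) (hirrα : Irrational α)
    (hγ : γ ∈ Set.Ioo (0:ℝ) 1) (hirrγ : Irrational γ)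
    (hρ₁ : ρ₁ ∈ Set.Ico (0:ℝ) 1) (hρ₂ : ρ₂ ∈ Set.Ico (0:ℝ) 1)
    (n : ℕ) (hn : 1 ≤ n) :
    ({w : List ℕ | ∃ i, w = fac (colour (sturmian α ρ₁) (fun _ => 1) (sturmian23 γ ρ₂)) i n}.ncard : ℤ) ≤
      ({w : List Bool | (∃ i, w = fac (sturmian α ρ₁) i n) ∧
          (w.count true : ℤ) = ⌈(n : ℝ) * α⌉}.ncard : ℤ) + (n + 1) * ⌈(n : ℝ) * α⌉ :=
  stmt_5_general α ρ₁ γ ρ₂ hα hγ n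
end

section
/- Let m ≥ 3, α = 1/β with β = (m+√(m²−4))/2, and let (n)_U = a_N ⋯ a_1 a_0 be the U-expansion of n. Let b_0 be the last digit of the U-expansion of n+1, and set ΔP_α(n) = P_α(n+1) − P_α(n). If b_0 = 0 then a_N ⋯ a_1 is the U-expansion of n + ΔP_α(n) − 1; if b_0 ≠ 0 then a_N ⋯ a_1 is the U-expansion of ΔP_α(n) − 1. -/
/-!
Since `α ^ 2 = m * α - 1`, the shifted sequence satisfies `U_{k+1} α = U_k + α ^ (k+1)`, so
for `n = ∑ a_k U_k` we get `n α = ∑ a_k U_{k-1} + ∑ a_k α ^ (k+1)`. Greediness of the expansion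
keeps the second sum in `[0, 1)`; hence `⌊n α⌋` has the expansion `a_N ⋯ a_1` and
`{n α} = ∑ a_k α ^ (k+1)`. On the other hand `[{x} ≤ {x + y}] = 1 + ⌊x⌋ + ⌊y⌋ - ⌊x + y⌋`, summed
over `x + y = n α`, gives `ΔP(n) = 1 + (n + 1) ⌊n α⌋ - n ⌊(n + 1) α⌋`. So everything hinges on
whether `⌊(n + 1) α⌋ - ⌊n α⌋` is `1` or `0`, that is on whether `{(n + 1) α} = ∑ b_k α ^ (k+1)` is
below `α`, which happens exactly when `b_0 = 0`.
-/

open scoped Classical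

/-- The sequence `U` from the paper, with index shifted by one:
`U m 0 = U_{-1} = 0`, `U m 1 = U_0 = 1`, `U m (k+2) = m * U m (k+1) - U m k`. -/
def U (m : ℕ) : ℕ → ℤ
  | 0 => 0
  | 1 => 1
  | (k + 2) => m * U m (k + 1) - U m k

/-- `Pfun α n = #{k ∈ {1,…,n} : {kα} ≤ {nα}}`. -/
noncomputable def Pfun (α : ℝ) (n : ℕ) : ℕ :=
  ((Finset.Icc 1 n).filter
    (fun k => Int.fract ((k : ℝ) * α) ≤ Int.fract ((n : ℝ) * α))).card

open Finset

theorem sum_Icc_one_eq_sum_range {M : Type*} [AddCommMonoid M] (f : ℕ → M) (n : ℕ) :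
    ∑ k ∈ Icc 1 n, f k = ∑ k ∈ range n, f (k + 1) := by
  rw [range_eq_Ico, sum_Ico_add' f 0 n 1]; rfl

section FloorRing

variable {R : Type*} [CommRing R] [LinearOrder R] [IsStrictOrderedRing R] [FloorRing R]

theorem ite_fract_le_fract_add (x y : R) :
    (if Int.fract x ≤ Int.fract (x + y) then 1 else 0 : ℤ) = 1 + ⌊x⌋ + ⌊y⌋ - ⌊x + y⌋ := by
  have hfract :
      Int.fract x + Int.fract y - Int.fract (x + y) = ((⌊x + y⌋ - ⌊x⌋ - ⌊y⌋ : ℤ) : R) := by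
    simp only [Int.fract]; push_cast; ring
  have hlo : -1 < ⌊x + y⌋ - ⌊x⌋ - ⌊y⌋ := by
    have : (-1 : R) < ((⌊x + y⌋ - ⌊x⌋ - ⌊y⌋ : ℤ) : R) := by
      linarith [Int.fract_nonneg x, Int.fract_nonneg y, Int.fract_lt_one (x + y)]
    exact_mod_cast this
  have hhi : ⌊x + y⌋ - ⌊x⌋ - ⌊y⌋ < 2 := by
    have : ((⌊x + y⌋ - ⌊x⌋ - ⌊y⌋ : ℤ) : R) < 2 := by
      linarith [Int.fract_lt_one x, Int.fract_lt_one y, Int.fract_nonneg (x + y)]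
    exact_mod_cast this
  obtain h | h : ⌊x + y⌋ - ⌊x⌋ - ⌊y⌋ = 0 ∨ ⌊x + y⌋ - ⌊x⌋ - ⌊y⌋ = 1 := by omega
  · rw [h] at hfract
    rw [if_pos (by push_cast at hfract; linarith [Int.fract_nonneg y])]; omega
  · rw [h] at hfract
    rw [if_neg (by push_cast at hfract; linarith [Int.fract_lt_one y])]; omega

theorem Int.floor_add_of_le_fract {x a : R} (ha : 0 ≤ a) (h : a ≤ Int.fract (x + a)) :
    ⌊x + a⌋ = ⌊x⌋ := by
  rw [Int.fract] at h
  exact le_antisymm (Int.le_floor.mpr (by linarith)) (Int.floor_le_floor (by linarith))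

theorem Int.floor_add_of_fract_lt {x a : R} (ha : a < 1) (h : Int.fract (x + a) < a) :
    ⌊x + a⌋ = ⌊x⌋ + 1 := by
  rw [Int.fract] at h
  have hlo : ⌊x⌋ < ⌊x + a⌋ := Int.floor_lt.mpr (by linarith)
  have hhi : ⌊x + a⌋ ≤ ⌊x⌋ + 1 := by
    rw [← Int.floor_add_one]; exact Int.floor_le_floor (by linarith)
  omega

end FloorRing

theorem Pfun_add_one_eq_sum (α : ℝ) (n : ℕ) :
    (Pfun α n : ℤ) + 1 =
      ∑ k ∈ range (n + 1), if Int.fract ((k : ℝ) * α) ≤ Int.fract ((n : ℝ) * α) then 1 else 0 := by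
  -- in `Pfun` the `Finset ℕ` is coerced to a `Finset ℝ` through the monad structure of `Finset`
  have himage : (do let a ← Icc 1 n; pure (a : ℝ)) = (Icc 1 n).image (Nat.cast) :=
    sup_singleton_apply _ _
  rw [Pfun, himage, filter_image, card_image_of_injective _ Nat.cast_injective, card_filter,
    sum_range_succ', sum_Icc_one_eq_sum_range]
  push_cast
  simp [Int.fract_nonneg]

theorem Pfun_add_one_eq (α : ℝ) (n : ℕ) :
    (Pfun α n : ℤ) + 1 =
      (n + 1) * (1 - ⌊(n : ℝ) * α⌋) + 2 * ∑ k ∈ range (n + 1), ⌊(k : ℝ) * α⌋ := by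
  have hterm : ∀ k ∈ range (n + 1),
      (if Int.fract ((k : ℝ) * α) ≤ Int.fract ((n : ℝ) * α) then 1 else 0 : ℤ) =
        1 - ⌊(n : ℝ) * α⌋ + ⌊(k : ℝ) * α⌋ + ⌊((n - k : ℕ) : ℝ) * α⌋ := by
    intro k hk
    have hsplit : (n : ℝ) * α = k * α + ((n - k : ℕ) : ℝ) * α := by
      rw [Nat.cast_sub (Nat.lt_succ_iff.mp (mem_range.mp hk))]; ring
    rw [hsplit, ite_fract_le_fract_add]; ring
  have hreflect :
      ∑ k ∈ range (n + 1), ⌊((n - k : ℕ) : ℝ) * α⌋ = ∑ k ∈ range (n + 1), ⌊(k : ℝ) * α⌋ :=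
    sum_range_reflect (fun k => ⌊(k : ℝ) * α⌋) (n + 1)
  rw [Pfun_add_one_eq_sum, sum_congr rfl hterm, sum_add_distrib, sum_add_distrib, hreflect]
  simp only [sum_const, card_range, nsmul_eq_mul]
  push_cast; ring

theorem Pfun_succ_sub (α : ℝ) (n : ℕ) :
    (Pfun α (n + 1) : ℤ) - Pfun α n = 1 + (n + 1) * ⌊(n : ℝ) * α⌋ - n * ⌊(n : ℝ) * α + α⌋ := by
  have hsucc := Pfun_add_one_eq α (n + 1)
  rw [sum_range_succ] at hsucc
  have h := Pfun_add_one_eq α n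
  push_cast at hsucc
  rw [add_one_mul (n : ℝ) α] at hsucc
  linear_combination hsucc - h

theorem one_div_root_spec {m : ℕ} (hm : 3 ≤ m) {β α : ℝ}
    (hβ : β = (m + Real.sqrt ((m : ℝ) ^ 2 - 4)) / 2) (hα : α = 1 / β) :
    α ^ 2 = m * α - 1 ∧ 0 < α ∧ α < 1 := by
  have hm' : (3 : ℝ) ≤ m := by exact_mod_cast hm
  have hsq := Real.sq_sqrt (show (0 : ℝ) ≤ (m : ℝ) ^ 2 - 4 by nlinarith)
  have hβ1 : 1 < β := by rw [hβ]; linarith [Real.sqrt_nonneg ((m : ℝ) ^ 2 - 4)]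
  have hβq : β ^ 2 = m * β - 1 := by rw [hβ]; linear_combination hsq / 4
  subst hα
  refine ⟨?_, by positivity, (div_lt_one (by linarith)).mpr hβ1⟩
  field_simp
  linear_combination hβq

section UExpansion

variable {m : ℕ}

theorem U_zero : U m 0 = 0 := rfl

theorem U_one : U m 1 = 1 := rfl

theorem U_add_two (k : ℕ) : U m (k + 2) = m * U m (k + 1) - U m k := rfl

theorem U_strictMono (hm : 2 ≤ m) : StrictMono (U m) := by
  have key : ∀ k, 0 ≤ U m k ∧ U m k < U m (k + 1) := by
    intro k
    induction k with
    | zero => simp [U_zero, U_one]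
    | succ k ih =>
      have hm' : (2 : ℤ) ≤ m := by exact_mod_cast hm
      refine ⟨by linarith, ?_⟩
      rw [U_add_two]
      nlinarith
  exact strictMono_nat_of_lt_succ fun k => (key k).2

theorem U_succ_pos (hm : 2 ≤ m) (k : ℕ) : 0 < U m (k + 1) :=
  U_zero (m := m) ▸ U_strictMono hm k.succ_pos

theorem U_nonneg (hm : 2 ≤ m) (k : ℕ) : 0 ≤ U m k :=
  U_zero (m := m) ▸ (U_strictMono hm).monotone k.zero_le

theorem U_succ_mul (α : ℝ) (hα : α ^ 2 = m * α - 1) :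
    ∀ k, (U m (k + 1) : ℝ) * α = U m k + α ^ (k + 1)
  | 0 => by simp [U_zero, U_one]
  | 1 => by
    rw [U_add_two, zero_add, U_one, U_zero]; push_cast; linear_combination -hα
  | k + 2 => by
    have h1 := U_succ_mul α hα k
    have h2 := U_succ_mul α hα (k + 1)
    rw [U_add_two (k + 1)]
    rw [U_add_two k] at h2 ⊢
    push_cast at h2 ⊢
    linear_combination m * h2 - h1 - α ^ (k + 1) * hα

-- `c k` is the digit of `U_k = U m (k + 1)`, so `c 0` is the last digit of the expansion.
def uValue (m : ℕ) (c : ℕ → ℕ) (L : ℕ) : ℤ := ∑ k ∈ range L, (c k : ℤ) * U m (k + 1)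

def alphaValue (α : ℝ) (c : ℕ → ℕ) (L : ℕ) : ℝ := ∑ k ∈ range L, (c k : ℝ) * α ^ (k + 1)

def IsGreedy (m : ℕ) (c : ℕ → ℕ) (L : ℕ) : Prop := ∀ i ≤ L, uValue m c i < U m (i + 1)

variable {α : ℝ} {c : ℕ → ℕ} {L : ℕ}

theorem uValue_succ : uValue m c (L + 1) = uValue m c L + c L * U m (L + 1) := sum_range_succ _ _

theorem uValue_tail_eq_sum_range :
    uValue m (fun k => c (k + 1)) L = ∑ k ∈ range (L + 1), (c k : ℤ) * U m k := by
  rw [sum_range_succ', U_zero, mul_zero, add_zero]; rfl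

theorem uValue_tail_eq_sum_Icc :
    uValue m (fun k => c (k + 1)) L = ∑ k ∈ Icc 1 L, (c k : ℤ) * U m k :=
  (sum_Icc_one_eq_sum_range (fun k => (c k : ℤ) * U m k) L).symm

theorem alphaValue_succ : alphaValue α c (L + 1) = alphaValue α c L + c L * α ^ (L + 1) :=
  sum_range_succ _ _

theorem alphaValue_succ' :
    alphaValue α c (L + 1) = c 0 * α + α * alphaValue α (fun k => c (k + 1)) L := by
  rw [alphaValue, sum_range_succ', alphaValue, mul_sum, add_comm]
  congr 1
  · ring
  · exact sum_congr rfl fun k _ => by ring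

theorem alphaValue_nonneg (hα0 : 0 ≤ α) : 0 ≤ alphaValue α c L :=
  sum_nonneg fun _ _ => by positivity

theorem uValue_mul (hα : α ^ 2 = m * α - 1) :
    (uValue m c (L + 1) : ℝ) * α = uValue m (fun k => c (k + 1)) L + alphaValue α c (L + 1) := by
  rw [uValue_tail_eq_sum_range, uValue, alphaValue]
  push_cast
  rw [sum_mul, ← sum_add_distrib]
  refine sum_congr rfl fun k _ => ?_
  linear_combination (c k : ℝ) * U_succ_mul α hα k

theorem eq_zero_of_alphaValue_lt_pow (hα0 : 0 < α) (hα1 : α < 1)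
    (h : alphaValue α c L < α ^ L) : ∀ k < L, c k = 0 := by
  intro k hk
  by_contra hck
  have hterm : (c k : ℝ) * α ^ (k + 1) ≤ alphaValue α c L :=
    single_le_sum (f := fun k => (c k : ℝ) * α ^ (k + 1)) (fun _ _ => by positivity)
      (mem_range.mpr hk)
  have hpow : α ^ L ≤ α ^ (k + 1) := pow_le_pow_of_le_one hα0.le hα1.le hk
  have hdigit : (1 : ℝ) ≤ c k := by exact_mod_cast Nat.one_le_iff_ne_zero.mpr hck
  nlinarith [pow_pos hα0 (k + 1)]

theorem isGreedy_succ_of_forall (h : ∀ i ≤ L, uValue m c (i + 1) < U m (i + 2)) :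
    IsGreedy m c (L + 1) := by
  rintro (_ | i) hi
  · simp [uValue, U_one]
  · exact h i (by omega)

theorem IsGreedy.mono {L' : ℕ} (h : IsGreedy m c L) (hL : L' ≤ L) : IsGreedy m c L' :=
  fun i hi => h i (hi.trans hL)

theorem IsGreedy.tail (hm : 2 ≤ m) (hα : α ^ 2 = m * α - 1) (hα0 : 0 < α) (hα1 : α < 1)
    (h : IsGreedy m c (L + 1)) : IsGreedy m (fun k => c (k + 1)) L := by
  intro i hi
  by_contra! hge
  have hlt : (uValue m c (i + 1) : ℝ) < U m (i + 2) := by exact_mod_cast h (i + 1) (by omega)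
  have hmul := uValue_mul (c := c) (L := i) hα
  have hU := U_succ_mul α hα (i + 1)
  have hge' : (U m (i + 1) : ℝ) ≤ uValue m (fun k => c (k + 1)) i := by exact_mod_cast hge
  have hsmall : alphaValue α c (i + 1) < α ^ (i + 1) := by
    have := mul_lt_mul_of_pos_right hlt hα0
    have : α ^ (i + 2) ≤ α ^ (i + 1) := pow_le_pow_of_le_one hα0.le hα1.le (by omega)
    linarith
  have hzero : uValue m (fun k => c (k + 1)) i = 0 :=
    sum_eq_zero fun k hk => by
      simp [eq_zero_of_alphaValue_lt_pow hα0 hα1 hsmall (k + 1) (by simp at hk; omega)]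
  linarith [U_succ_pos hm i]

theorem uValue_nonneg (hm : 2 ≤ m) : 0 ≤ uValue m c L :=
  sum_nonneg fun _ _ => mul_nonneg (Int.natCast_nonneg _) (U_nonneg hm _)

-- `j = 1` is the sharper bound that the induction needs below a maximal top digit.
theorem alphaValue_le_of_isGreedy (hm : 2 ≤ m) (hα : α ^ 2 = m * α - 1) (hα0 : 0 < α)
    (hα1 : α < 1) : ∀ {L : ℕ}, IsGreedy m c L → ∀ j : ℕ, j ≤ 1 →
      uValue m c L + j * U m L < U m (L + 1) → alphaValue α c L ≤ 1 - (1 - (1 - j) * α) * α ^ L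
  | 0, _, j, hj, _ => by interval_cases j <;> simp [alphaValue, hα0.le]
  | L + 1, h, j, hj, hjL => by
    have ih := alphaValue_le_of_isGreedy hm hα hα0 hα1 (h.mono L.le_succ)
    rw [uValue_succ, U_add_two] at hjL
    have hslack : 0 ≤ j * α ^ L * (α - α ^ 2) :=
      mul_nonneg (by positivity) (by nlinarith)
    rw [alphaValue_succ, pow_succ]
    obtain hd | hd : c L + j + 2 ≤ m ∨ c L + j + 1 = m := by
      have : ((c L + j : ℕ) : ℤ) * U m (L + 1) < m * U m (L + 1) := by
        push_cast; nlinarith [U_nonneg hm L, uValue_nonneg (c := c) (L := L) hm]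
      have := lt_of_mul_lt_mul_right this (U_succ_pos hm L).le
      omega
    · have hlow := ih 0 (Nat.zero_le 1) (by simpa using h L L.le_succ)
      have hd' : (c L : ℝ) + j + 2 ≤ m := by exact_mod_cast hd
      have key : (1 - α) * α ^ L - (c L * (α ^ L * α) + (1 - (1 - j) * α) * (α ^ L * α)) =
          (m - 2 - j - c L) * (α ^ L * α) + j * α ^ L * (α - α ^ 2) := by
        linear_combination α ^ L * hα
      push_cast at hlow
      linarith [mul_nonneg (sub_nonneg.mpr hd') (by positivity : 0 ≤ α ^ L * α)]
    · -- a top digit `m - 1 - j` leaves room for `U m L` below it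
      have hlow := ih 1 le_rfl (by
        have hdZ : (c L : ℤ) + j + 1 = m := by exact_mod_cast hd
        rw [← hdZ] at hjL; push_cast; linarith)
      have hd' : (c L : ℝ) + j + 1 = m := by exact_mod_cast hd
      have key : α ^ L - (c L * (α ^ L * α) + (1 - (1 - j) * α) * (α ^ L * α)) =
          j * α ^ L * (α - α ^ 2) := by
        linear_combination α ^ L * hα - α ^ L * α * hd'
      norm_num at hlow
      linarith

theorem alphaValue_lt_one (hm : 2 ≤ m) (hα : α ^ 2 = m * α - 1) (hα0 : 0 < α) (hα1 : α < 1)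
    (h : IsGreedy m c L) : alphaValue α c L < 1 := by
  have hle := alphaValue_le_of_isGreedy hm hα hα0 hα1 h 0 (Nat.zero_le 1)
    (by simpa using h L le_rfl)
  have hpos : 0 < (1 - α) * α ^ L := mul_pos (by linarith) (pow_pos hα0 L)
  simp only [Nat.cast_zero, sub_zero, one_mul] at hle
  linarith

theorem floor_uValue_mul (hm : 2 ≤ m) (hα : α ^ 2 = m * α - 1) (hα0 : 0 < α) (hα1 : α < 1)
    (h : IsGreedy m c (L + 1)) :
    ⌊(uValue m c (L + 1) : ℝ) * α⌋ = uValue m (fun k => c (k + 1)) L := by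
  rw [Int.floor_eq_iff, uValue_mul hα]
  constructor <;> linarith [alphaValue_nonneg (α := α) (c := c) (L := L + 1) hα0.le,
    alphaValue_lt_one hm hα hα0 hα1 h]

theorem fract_uValue_mul (hm : 2 ≤ m) (hα : α ^ 2 = m * α - 1) (hα0 : 0 < α) (hα1 : α < 1)
    (h : IsGreedy m c (L + 1)) :
    Int.fract ((uValue m c (L + 1) : ℝ) * α) = alphaValue α c (L + 1) := by
  rw [← Int.self_sub_floor, floor_uValue_mul hm hα hα0 hα1 h, uValue_mul hα]
  ring

end UExpansion

theorem stmt_19_general (m : ℕ) (hm : 3 ≤ m) (β α : ℝ)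
    (hβ : β = (m + Real.sqrt ((m : ℝ) ^ 2 - 4)) / 2) (hα : α = 1 / β)
    (n : ℕ) (N M : ℕ) (a b : ℕ → ℕ)
    -- `a N ⋯ a 0` is the U-expansion of `n`
    (hsuma : (n : ℤ) = ∑ k ∈ Finset.range (N + 1), (a k : ℤ) * U m (k + 1))
    (hgreedya : ∀ i ≤ N,
      ∑ k ∈ Finset.range (i + 1), (a k : ℤ) * U m (k + 1) < U m (i + 2))
    -- `b M ⋯ b 0` is the U-expansion of `n + 1`
    (hsumb : ((n : ℤ) + 1) = ∑ k ∈ Finset.range (M + 1), (b k : ℤ) * U m (k + 1))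
    (hgreedyb : ∀ i ≤ M,
      ∑ k ∈ Finset.range (i + 1), (b k : ℤ) * U m (k + 1) < U m (i + 2)) :
    (∀ i ≤ N, ∑ k ∈ Finset.Icc 1 i, (a k : ℤ) * U m k < U m (i + 1)) ∧
    (b 0 = 0 →
      (n : ℤ) + ((Pfun α (n + 1) : ℤ) - (Pfun α n : ℤ)) - 1 =
        ∑ k ∈ Finset.Icc 1 N, (a k : ℤ) * U m k) ∧
    (b 0 ≠ 0 →
      ((Pfun α (n + 1) : ℤ) - (Pfun α n : ℤ)) - 1 =
        ∑ k ∈ Finset.Icc 1 N, (a k : ℤ) * U m k) := by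
  obtain ⟨hαq, hα0, hα1⟩ := one_div_root_spec hm hβ hα
  have hm2 : 2 ≤ m := by omega
  have ga : IsGreedy m a (N + 1) := isGreedy_succ_of_forall hgreedya
  have gb : IsGreedy m b (M + 1) := isGreedy_succ_of_forall hgreedyb
  have hfloor : ⌊(n : ℝ) * α⌋ = ∑ k ∈ Icc 1 N, (a k : ℤ) * U m k := by
    rw [← uValue_tail_eq_sum_Icc, ← floor_uValue_mul hm2 hαq hα0 hα1 ga, uValue, ← hsuma,
      Int.cast_natCast]
  have hfract :
      Int.fract ((n : ℝ) * α + α) = b 0 * α + α * alphaValue α (fun k => b (k + 1)) M := by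
    rw [← alphaValue_succ', ← fract_uValue_mul hm2 hαq hα0 hα1 gb, uValue, ← hsumb]
    congr 1
    push_cast; ring
  have hΔ := Pfun_succ_sub α n
  refine ⟨fun i hi => ?_, fun hb0 => ?_, fun hb0 => ?_⟩
  · rw [← uValue_tail_eq_sum_Icc]
    exact ga.tail hm2 hαq hα0 hα1 i hi
  · have hlt := alphaValue_lt_one hm2 hαq hα0 hα1 (gb.tail hm2 hαq hα0 hα1)
    have hcarry : Int.fract ((n : ℝ) * α + α) < α := by
      rw [hfract, hb0, Nat.cast_zero, zero_mul, zero_add]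
      exact mul_lt_of_lt_one_right hα0 hlt
    rw [Int.floor_add_of_fract_lt hα1 hcarry] at hΔ
    rw [← hfloor]
    linear_combination hΔ
  · have hb0' : (1 : ℝ) ≤ b 0 := by exact_mod_cast Nat.one_le_iff_ne_zero.mpr hb0
    have hnn := alphaValue_nonneg (c := fun k => b (k + 1)) (L := M) hα0.le
    rw [Int.floor_add_of_le_fract hα0.le (by rw [hfract]; nlinarith)] at hΔ
    rw [← hfloor]
    linear_combination hΔ

theorem stmt_19 (m : ℕ) (hm : 3 ≤ m) (β α : ℝ)
    (hβ : β = (m + Real.sqrt ((m : ℝ) ^ 2 - 4)) / 2) (hα : α = 1 / β)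
    (n : ℕ) (hn : 1 ≤ n) (N M : ℕ) (a b : ℕ → ℕ)
    -- `a N ⋯ a 0` is the U-expansion of `n`
    (hsuma : (n : ℤ) = ∑ k ∈ Finset.range (N + 1), (a k : ℤ) * U m (k + 1))
    (hleada : a N ≠ 0)
    (hgreedya : ∀ i ≤ N,
      ∑ k ∈ Finset.range (i + 1), (a k : ℤ) * U m (k + 1) < U m (i + 2))
    -- `b M ⋯ b 0` is the U-expansion of `n + 1`
    (hsumb : ((n : ℤ) + 1) = ∑ k ∈ Finset.range (M + 1), (b k : ℤ) * U m (k + 1))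
    (hleadb : b M ≠ 0)
    (hgreedyb : ∀ i ≤ M,
      ∑ k ∈ Finset.range (i + 1), (b k : ℤ) * U m (k + 1) < U m (i + 2)) :
    (∀ i ≤ N, ∑ k ∈ Finset.Icc 1 i, (a k : ℤ) * U m k < U m (i + 1)) ∧
    (b 0 = 0 →
      (n : ℤ) + ((Pfun α (n + 1) : ℤ) - (Pfun α n : ℤ)) - 1 =
        ∑ k ∈ Finset.Icc 1 N, (a k : ℤ) * U m k) ∧
    (b 0 ≠ 0 →
      ((Pfun α (n + 1) : ℤ) - (Pfun α n : ℤ)) - 1 =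
        ∑ k ∈ Finset.Icc 1 N, (a k : ℤ) * U m k) :=
  stmt_19_general m hm β α hβ hα n N M a b hsuma hgreedya hsumb hgreedyb
end
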